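/- arXiv:1507.02957 — 3 statements merged into one kernel-verified Lean document; each statement's English description precedes it below -/
import Mathlib

section
/- Let G = conv{o_1,...,o_{k+1}} ⊆ S where the o_i are affinely independent, and suppose there exist linearly independent vectors b_1,...,b_{k+1} in R^n with b_i ∈ B ∩ C(o_i) for each i. Define f : G → B by f(∑ α_i o_i) = ∑ α_i b_i for convex coefficients α_i. Then f is well-defined, affine, f(x) ≠ 0 for all x in G, and f(x) ∈ C(x) for all x in G. -/
open Matrix

/-- The set of indices of strictly positive barycentric coordinates of `x`
with respect to the affine basis (simplex vertices) `b`. -/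
noncomputable def isupp {n : ℕ} (b : AffineBasis (Fin (n + 1)) ℝ (Fin n → ℝ))
    (x : Fin n → ℝ) : Set (Fin (n + 1)) :=
  {i | 0 < b.coord i x}

/-- The inward-pointing cone determined by the outward facet normals `h`
and an index set `I`: all constraints `h j ⬝ᵥ y ≤ 0` for `j ∉ I`, `j ≠ 0`
(the exit facet `0` imposes no constraint). -/
def icone {n : ℕ} (h : Fin (n + 1) → Fin n → ℝ) (I : Set (Fin (n + 1))) :
    Set (Fin n → ℝ) :=
  {y | ∀ j : Fin (n + 1), j ≠ 0 → j ∉ I → h j ⬝ᵥ y ≤ 0}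

/-- `h j` is an outward normal to the facet of the simplex with vertices `v`
opposite the vertex `v j`, for every `j ≠ 0`. -/
def IsOutwardNormals {n : ℕ} (v h : Fin (n + 1) → Fin n → ℝ) : Prop :=
  ∀ j : Fin (n + 1), j ≠ 0 →
    (∀ i, i ≠ j → ∀ k, k ≠ j → h j ⬝ᵥ v i = h j ⬝ᵥ v k) ∧
    (∀ i, i ≠ j → h j ⬝ᵥ v j < h j ⬝ᵥ v i)

/-! The interpolating affine map exists because the `oᵢ` are affinely independent. A point `x` of
`G` is a convex combination `∑ αᵢ oᵢ`, so `f x = ∑ αᵢ bᵢ`: this lies in `B`, it is nonzero because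
the `αᵢ` sum to `1` and the `bᵢ` are linearly independent, and it lies in `C(x)` because every `oᵢ`
with `αᵢ > 0` has `I(oᵢ) ⊆ I(x)` (barycentric coordinates on `S` are nonnegative), hence
`bᵢ ∈ C(oᵢ) ⊆ C(x)`, and `C(x)` is a convex cone. -/

theorem LinearIndependent.exists_linearMap_apply_eq {K V W ι : Type*} [DivisionRing K]
    [AddCommGroup V] [Module K V] [AddCommGroup W] [Module K W] {v : ι → V}
    (hv : LinearIndependent K v) (w : ι → W) : ∃ L : V →ₗ[K] W, ∀ i, L (v i) = w i := by
  obtain ⟨g, hg⟩ := (Finsupp.linearCombination K v).exists_leftInverse_of_injective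
    (LinearMap.ker_eq_bot.mpr hv)
  refine ⟨Finsupp.linearCombination K w ∘ₗ g, fun i => ?_⟩
  have hgv : g (v i) = Finsupp.single i 1 := by
    simpa using LinearMap.congr_fun hg (Finsupp.single i 1)
  simp [hgv]

theorem AffineIndependent.exists_affineMap_apply_eq {k V P V₂ P₂ ι : Type*} [DivisionRing k]
    [AddCommGroup V] [Module k V] [AddTorsor V P] [AddCommGroup V₂] [Module k V₂]
    [AddTorsor V₂ P₂] {p : ι → P} (hp : AffineIndependent k p) (q : ι → P₂) :
    ∃ f : P →ᵃ[k] P₂, ∀ i, f (p i) = q i := by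
  classical
  rcases isEmpty_or_nonempty ι with hι | ⟨⟨i₀⟩⟩
  · exact ⟨AffineMap.const k P (Classical.arbitrary P₂), isEmptyElim⟩
  obtain ⟨L, hL⟩ := ((affineIndependent_iff_linearIndependent_vsub k p i₀).mp hp)
    |>.exists_linearMap_apply_eq fun i => q i -ᵥ q i₀
  refine ⟨AffineMap.mk' (fun x => L (x -ᵥ p i₀) +ᵥ q i₀) L (p i₀) (by simp), fun i => ?_⟩
  by_cases hi : i = i₀
  · simp [hi]
  · simp [hL ⟨i, hi⟩]

theorem AffineMap.apply_affineCombination_eq_sum {k V P W ι : Type*} [Ring k]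
    [AddCommGroup V] [Module k V] [AddTorsor V P] [AddCommGroup W] [Module k W]
    (f : P →ᵃ[k] W) {s : Finset ι} {p : ι → P} {w : ι → k} (hw : ∑ i ∈ s, w i = 1) :
    f (s.affineCombination k p w) = ∑ i ∈ s, w i • f (p i) := by
  rw [Finset.map_affineCombination s p w hw, Finset.affineCombination_eq_linear_combination _ _ _ hw]
  rfl

theorem LinearIndependent.sum_smul_ne_zero_of_sum_eq_one {k V ι : Type*} [Ring k] [Nontrivial k]
    [AddCommGroup V] [Module k V] {v : ι → V} (hv : LinearIndependent k v) {s : Finset ι}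
    {w : ι → k} (hw : ∑ i ∈ s, w i = 1) : ∑ i ∈ s, w i • v i ≠ 0 := fun h0 => by
  have hw0 := linearIndependent_iff'.mp hv s w h0
  rw [Finset.sum_eq_zero hw0] at hw
  exact zero_ne_one hw

theorem icone_mono {n : ℕ} (h : Fin (n + 1) → Fin n → ℝ) {I J : Set (Fin (n + 1))}
    (hIJ : I ⊆ J) : icone h I ⊆ icone h J :=
  fun _ hy j hj0 hjJ => hy j hj0 (fun hjI => hjJ (hIJ hjI))

theorem sum_smul_mem_icone {n : ℕ} {ι : Type*} {h : Fin (n + 1) → Fin n → ℝ}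
    {I : Set (Fin (n + 1))} {s : Finset ι} {w : ι → ℝ} {y : ι → Fin n → ℝ}
    (hw : ∀ i ∈ s, 0 ≤ w i) (hy : ∀ i ∈ s, 0 < w i → y i ∈ icone h I) :
    ∑ i ∈ s, w i • y i ∈ icone h I := by
  intro j hj0 hjI
  rw [dotProduct_sum]
  refine Finset.sum_nonpos fun i hi => ?_
  rw [dotProduct_smul, smul_eq_mul]
  rcases (hw i hi).eq_or_lt with hwi | hwi
  · simp [← hwi]
  · exact mul_nonpos_of_nonneg_of_nonpos hwi.le (hy i hi hwi j hj0 hjI)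

theorem isupp_subset_isupp_affineCombination {n : ℕ} {ι : Type*}
    (bb : AffineBasis (Fin (n + 1)) ℝ (Fin n → ℝ)) {o : ι → Fin n → ℝ} {s : Finset ι}
    {w : ι → ℝ} (hoS : ∀ i ∈ s, o i ∈ convexHull ℝ (Set.range ⇑bb)) (hw : ∀ i ∈ s, 0 ≤ w i)
    (hw1 : ∑ i ∈ s, w i = 1) {i : ι} (hi : i ∈ s) (hwi : 0 < w i) :
    isupp bb (o i) ⊆ isupp bb (s.affineCombination ℝ o w) := by
  intro j hj
  have hcoord : ∀ i ∈ s, 0 ≤ w i * bb.coord j (o i) := fun i hi =>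
    mul_nonneg (hw i hi) (bb.convexHull_eq_nonneg_coord.subset (hoS i hi) j)
  show 0 < bb.coord j _
  rw [(bb.coord j).apply_affineCombination_eq_sum hw1]
  exact (mul_pos hwi hj).trans_le (Finset.single_le_sum hcoord hi)

theorem stmt6_general {n k : ℕ} (bb : AffineBasis (Fin (n + 1)) ℝ (Fin n → ℝ))
    (h : Fin (n + 1) → Fin n → ℝ)
    (B : Submodule ℝ (Fin n → ℝ))
    (o : Fin (k + 1) → Fin n → ℝ) (b : Fin (k + 1) → Fin n → ℝ)
    (ho : AffineIndependent ℝ o)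
    (hoS : ∀ i, o i ∈ convexHull ℝ (Set.range ⇑bb))
    (hb : LinearIndependent ℝ b) (hbB : ∀ i, b i ∈ B)
    (hbC : ∀ i, b i ∈ icone h (isupp bb (o i))) :
    ∃ f : (Fin n → ℝ) →ᵃ[ℝ] (Fin n → ℝ), (∀ i, f (o i) = b i) ∧
      ∀ x ∈ convexHull ℝ (Set.range o),
        f x ∈ B ∧ f x ≠ 0 ∧ f x ∈ icone h (isupp bb x) := by
  obtain ⟨f, hf⟩ := ho.exists_affineMap_apply_eq b
  refine ⟨f, hf, ?_⟩
  rw [convexHull_range_eq_exists_affineCombination]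
  rintro _ ⟨s, w, hw, hw1, rfl⟩
  rw [f.apply_affineCombination_eq_sum hw1]
  simp only [hf]
  refine ⟨B.sum_mem fun i _ => B.smul_mem _ (hbB i), hb.sum_smul_ne_zero_of_sum_eq_one hw1,
    sum_smul_mem_icone hw fun i hi hwi => ?_⟩
  exact icone_mono h (isupp_subset_isupp_affineCombination bb (fun i _ => hoS i) hw hw1 hi hwi)
    (hbC i)

/-- If `G = conv{o₁,…,o_{k+1}}` with the `oᵢ` affinely independent and there are
linearly independent `bᵢ ∈ B ∩ C(oᵢ)`, the affine interpolation is a well-defined,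
nowhere-vanishing selection satisfying the cone condition. -/
theorem stmt6 {n k : ℕ} (bb : AffineBasis (Fin (n + 1)) ℝ (Fin n → ℝ))
    (h : Fin (n + 1) → Fin n → ℝ) (hout : IsOutwardNormals (⇑bb) h)
    (B : Submodule ℝ (Fin n → ℝ))
    (o : Fin (k + 1) → Fin n → ℝ) (b : Fin (k + 1) → Fin n → ℝ)
    (ho : AffineIndependent ℝ o)
    (hoS : ∀ i, o i ∈ convexHull ℝ (Set.range ⇑bb))
    (hb : LinearIndependent ℝ b) (hbB : ∀ i, b i ∈ B)
    (hbC : ∀ i, b i ∈ icone h (isupp bb (o i))) :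
    ∃ f : (Fin n → ℝ) →ᵃ[ℝ] (Fin n → ℝ), (∀ i, f (o i) = b i) ∧
      ∀ x ∈ convexHull ℝ (Set.range o),
        f x ∈ B ∧ f x ≠ 0 ∧ f x ∈ icone h (isupp bb x) :=
  stmt6_general bb h B o b ho hoS hb hbB hbC
end

section
/- Let n = 3 and G = conv{o_1, o_2, o_3} ⊆ S with v_0 ∉ G and o_i ∈ (v_0, v_i] for i = 1,2,3 (so I(o_i) = {0, i} or {i}, and C(o_i) = {y : h_j · y ≤ 0 for j ∈ {1,2,3} \ {i}}). Suppose B ∩ cone(G) = {0}, where cone(G) = {y : h_j · y ≤ 0, j = 1,2,3}. Then there is no continuous map f : G → B \ {0} with f(x) ∈ C(x) for all x ∈ G. Consequently, such a map exists if and only if B ∩ cone(G) ≠ {0}. -/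
/-
Pull `f` back to the standard triangle along `μ ↦ Σ μᵢ oᵢ₊₁`. Since `oᵢ₊₁` lies on the line
through `v₀` and `vᵢ₊₁`, the barycentric coordinate of `vᵢ₊₁` vanishes where `μᵢ` does, so
`gᵢ(μ) = hᵢ₊₁ ⬝ᵥ f(Σ μⱼ oⱼ₊₁)` is `≤ 0` on the face `μᵢ = 0`. If the sets `{gᵢ > 0}` miss a point,
`f` takes a value in `B ∩ cone(G)` there. Otherwise they are a KKM cover: labelling the points of
ever finer grids by an index `i` with `gᵢ > 0` and applying Sperner's lemma, a Lebesgue number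
argument yields `x̄` with all `gᵢ(x̄) ≥ 0`, so `-f(x̄) ∈ B ∩ cone(G) = {0}`. Sperner's lemma is
proved by counting signed `0`–`1` doors row by row: the bottom row has one, the top row none,
and a strip without rainbow triangles does not change the count. Conversely a nonzero vector of
`B ∩ cone(G)` is a constant selection.
-/

open Matrix

/-- Signed indicator of an edge labelled `0`–`1` (a "door" in Sperner's argument). -/
def doorSign (a b : Fin 3) : ℤ :=
  if a = 0 ∧ b = 1 then 1 else if a = 1 ∧ b = 0 then -1 else 0

lemma doorSign_swap (a b : Fin 3) : doorSign b a = -doorSign a b := by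
  revert a b; decide

lemma doorSign_of_ne_zero {a b : Fin 3} (ha : a ≠ 0) (hb : b ≠ 0) : doorSign a b = 0 := by
  revert a b; decide

lemma doorSign_of_ne_one {a b : Fin 3} (ha : a ≠ 1) (hb : b ≠ 1) : doorSign a b = 0 := by
  revert a b; decide

lemma doorSign_of_ne_two {a b : Fin 3} (ha : a ≠ 2) (hb : b ≠ 2) :
    doorSign a b = (if b = 1 then 1 else 0) - (if a = 1 then 1 else 0) := by
  revert a b; decide

lemma rainbow_of_doorSign_cycle_ne_zero {a b c : Fin 3}
    (h : doorSign a b + doorSign b c + doorSign c a ≠ 0) (k : Fin 3) :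
    k = a ∨ k = b ∨ k = c := by
  revert a b c k; decide

/-- Discrete Stokes theorem on a strip: `a` and `b` are the vertices of two adjacent rows, of
lengths `m + 2` and `m + 1`, and the hypotheses say that every triangle of the strip has zero
circulation. -/
theorem sum_range_succ_eq_of_cycle_eq_zero {α M : Type*} [AddCommGroup M] (w : α → α → M)
    (hw : ∀ a b, w b a = -w a b) (a b : ℕ → α) (m : ℕ)
    (hup : ∀ x ≤ m, w (a x) (a (x + 1)) + w (a (x + 1)) (b x) + w (b x) (a x) = 0)
    (hdown : ∀ x < m,
      w (a (x + 1)) (b (x + 1)) + w (b (x + 1)) (b x) + w (b x) (a (x + 1)) = 0) :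
    ∑ x ∈ Finset.range (m + 1), w (a x) (a (x + 1))
      = ∑ x ∈ Finset.range m, w (b x) (b (x + 1)) + w (a 0) (b 0) + w (b m) (a (m + 1)) := by
  induction m with
  | zero =>
    simp only [zero_add, Finset.sum_range_one, Finset.range_zero, Finset.sum_empty]
    linear_combination (norm := module) hup 0 le_rfl - hw (b 0) (a 1) - hw (a 0) (b 0)
  | succ m ih =>
    rw [Finset.sum_range_succ, ih (fun x hx => hup x (by omega)) (fun x hx => hdown x (by omega)),
      Finset.sum_range_succ]
    linear_combination (norm := module) hup (m + 1) le_rfl + hdown m (by omega)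
      - hw (b (m + 1)) (a (m + 2)) - hw (b (m + 1)) (a (m + 1)) - hw (b m) (b (m + 1))

def rowDoors (L : ℕ → ℕ → Fin 3) (N y : ℕ) : ℤ :=
  ∑ x ∈ Finset.range (N - y), doorSign (L x y) (L (x + 1) y)

def IsRainbowCell (L : ℕ → ℕ → Fin 3) (N x y : ℕ) : Prop :=
  ∀ k, ∃ i ≤ 1, ∃ j ≤ 1, x + i + (y + j) ≤ N ∧ L (x + i) (y + j) = k

section Sperner

variable {L : ℕ → ℕ → Fin 3} {N : ℕ}

lemma isRainbowCell_of_up {x y : ℕ} (hxy : x + y < N)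
    (h : ∀ k, k = L x y ∨ k = L (x + 1) y ∨ k = L x (y + 1)) : IsRainbowCell L N x y := by
  intro k
  rcases h k with rfl | rfl | rfl
  exacts [⟨0, zero_le_one, 0, zero_le_one, by omega, rfl⟩,
    ⟨1, le_rfl, 0, zero_le_one, by omega, rfl⟩, ⟨0, zero_le_one, 1, le_rfl, by omega, rfl⟩]

lemma isRainbowCell_of_down {x y : ℕ} (hxy : x + y + 2 ≤ N)
    (h : ∀ k, k = L (x + 1) y ∨ k = L (x + 1) (y + 1) ∨ k = L x (y + 1)) :
    IsRainbowCell L N x y := by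
  intro k
  rcases h k with rfl | rfl | rfl
  exacts [⟨1, le_rfl, 0, zero_le_one, by omega, rfl⟩,
    ⟨1, le_rfl, 1, le_rfl, by omega, rfl⟩, ⟨0, zero_le_one, 1, le_rfl, by omega, rfl⟩]

lemma rowDoors_zero (h0 : ∀ x y, x + y = N → L x y ≠ 0) (h1 : ∀ y ≤ N, L 0 y ≠ 1)
    (h2 : ∀ x ≤ N, L x 0 ≠ 2) : rowDoors L N 0 = 1 := by
  have hN : L N 0 = 1 := by
    have := h0 N 0 rfl; have := h2 N le_rfl; omega
  rw [rowDoors, Nat.sub_zero,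
    Finset.sum_congr rfl fun x hx => doorSign_of_ne_two (h2 x (Finset.mem_range.1 hx).le)
      (h2 (x + 1) (Finset.mem_range.1 hx)),
    Finset.sum_range_sub (fun x => if L x 0 = 1 then (1 : ℤ) else 0), hN,
    if_neg (h1 0 N.zero_le), if_pos rfl, sub_zero]

lemma rowDoors_succ (h0 : ∀ x y, x + y = N → L x y ≠ 0) (h1 : ∀ y ≤ N, L 0 y ≠ 1)
    {y : ℕ} (hy : y < N) (hnone : ∀ x, x + y < N → ¬ IsRainbowCell L N x y) :
    rowDoors L N (y + 1) = rowDoors L N y := by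
  obtain ⟨m, hm⟩ : ∃ m, N - y = m + 1 := ⟨N - y - 1, by omega⟩
  have hm' : N - (y + 1) = m := by omega
  rw [rowDoors, rowDoors, hm, hm',
    sum_range_succ_eq_of_cycle_eq_zero doorSign doorSign_swap (L · y) (L · (y + 1)) m
      (fun x hx => not_not.1 fun hne => hnone x (by omega)
        (isRainbowCell_of_up (by omega) (rainbow_of_doorSign_cycle_ne_zero hne)))
      (fun x hx => not_not.1 fun hne => hnone x (by omega)
        (isRainbowCell_of_down (by omega) (rainbow_of_doorSign_cycle_ne_zero hne))),
    doorSign_of_ne_one (h1 y hy.le) (h1 (y + 1) hy),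
    doorSign_of_ne_zero (h0 _ _ (by omega)) (h0 _ _ (by omega)), add_zero, add_zero]

theorem exists_isRainbowCell (h0 : ∀ x y, x + y = N → L x y ≠ 0) (h1 : ∀ y ≤ N, L 0 y ≠ 1)
    (h2 : ∀ x ≤ N, L x 0 ≠ 2) : ∃ x y, x + y < N ∧ IsRainbowCell L N x y := by
  by_contra! hnone
  have hrows : ∀ y ≤ N, rowDoors L N y = 1 := by
    intro y hy
    induction y with
    | zero => exact rowDoors_zero h0 h1 h2
    | succ y ih => rw [rowDoors_succ h0 h1 hy fun x hx => hnone x y hx, ih (by omega)]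
  simpa [rowDoors] using hrows N le_rfl

end Sperner

noncomputable def gridPoint (N x y : ℕ) : Fin 3 → ℝ := ![((N : ℝ) - x - y) / N, x / N, y / N]

section KKM

variable {N : ℕ}

lemma gridPoint_mem_stdSimplex (hN : 0 < N) {x y : ℕ} (hxy : x + y ≤ N) :
    gridPoint N x y ∈ stdSimplex ℝ (Fin 3) := by
  have hN' : (0 : ℝ) < N := by exact_mod_cast hN
  have hxy' : (x : ℝ) + y ≤ N := by exact_mod_cast hxy
  refine ⟨fun k => ?_, ?_⟩
  · fin_cases k
    · exact div_nonneg (by simp; linarith) hN'.le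
    all_goals simp [gridPoint]; positivity
  · simp [gridPoint, Fin.sum_univ_three]
    field_simp
    ring

lemma dist_gridPoint_le (hN : 0 < N) (x y : ℕ) {i j : ℕ} (hi : i ≤ 1) (hj : j ≤ 1) :
    dist (gridPoint N (x + i) (y + j)) (gridPoint N x y) ≤ 2 / N := by
  have hN' : (0 : ℝ) < N := by exact_mod_cast hN
  have hi' : (i : ℝ) ≤ 1 := by exact_mod_cast hi
  have hj' : (j : ℝ) ≤ 1 := by exact_mod_cast hj
  rw [dist_pi_le_iff (by positivity), Fin.forall_fin_succ, Fin.forall_fin_two]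
  simp only [gridPoint, Real.dist_eq, Fin.succ_zero_eq_one, Fin.succ_one_eq_two,
    Matrix.cons_val_zero, Matrix.cons_val_one, Matrix.cons_val_two, Matrix.head_cons,
    Matrix.tail_cons, ← sub_div, abs_div, abs_of_pos hN', Nat.cast_add]
  refine ⟨?_, ?_, ?_⟩ <;> gcongr <;> rw [abs_le] <;> constructor <;>
    linarith [(i.cast_nonneg : (0 : ℝ) ≤ i), (j.cast_nonneg : (0 : ℝ) ≤ j)]

variable {g : (Fin 3 → ℝ) → Fin 3 → ℝ}

theorem exists_gridCell_forall_pos (hcover : ∀ μ ∈ stdSimplex ℝ (Fin 3), ∃ k, 0 < g μ k)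
    (hface : ∀ μ ∈ stdSimplex ℝ (Fin 3), ∀ k, μ k = 0 → g μ k ≤ 0) (hN : 0 < N) :
    ∃ x y, x + y < N ∧ ∀ k, ∃ i ≤ 1, ∃ j ≤ 1,
      gridPoint N (x + i) (y + j) ∈ stdSimplex ℝ (Fin 3) ∧
        0 < g (gridPoint N (x + i) (y + j)) k := by
  classical
  let L : ℕ → ℕ → Fin 3 := fun x y =>
    if h : ∃ k, 0 < g (gridPoint N x y) k then h.choose else 0
  have hL : ∀ x y, x + y ≤ N → 0 < g (gridPoint N x y) (L x y) := fun x y hxy => by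
    have h := hcover _ (gridPoint_mem_stdSimplex hN hxy)
    simpa only [L, dif_pos h] using h.choose_spec
  have hL_ne : ∀ x y k, x + y ≤ N → gridPoint N x y k = 0 → L x y ≠ k :=
    fun x y k hxy h0 hk => (hL x y hxy).not_ge (hk ▸ hface _ (gridPoint_mem_stdSimplex hN hxy) k h0)
  obtain ⟨x, y, hxy, hcell⟩ := exists_isRainbowCell (L := L)
    (fun x y hxy => hL_ne x y 0 hxy.le (by simp [gridPoint, ← hxy]))
    (fun y hy => hL_ne 0 y 1 (by omega) (by simp [gridPoint]))
    (fun x hx => hL_ne x 0 2 (by omega) (by simp [gridPoint]))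
  refine ⟨x, y, hxy, fun k => ?_⟩
  obtain ⟨i, hi, j, hj, hle, hk⟩ := hcell k
  exact ⟨i, hi, j, hj, gridPoint_mem_stdSimplex hN hle, hk ▸ hL _ _ hle⟩

/-- Knaster–Kuratowski–Mazurkiewicz for the relatively open sets `{μ | 0 < g μ k}`. -/
theorem exists_mem_stdSimplex_forall_nonneg (hg : ContinuousOn g (stdSimplex ℝ (Fin 3)))
    (hcover : ∀ μ ∈ stdSimplex ℝ (Fin 3), ∃ k, 0 < g μ k)
    (hface : ∀ μ ∈ stdSimplex ℝ (Fin 3), ∀ k, μ k = 0 → g μ k ≤ 0) :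
    ∃ μ ∈ stdSimplex ℝ (Fin 3), ∀ k, 0 ≤ g μ k := by
  by_contra! hneg
  have hopen k :=
    continuousOn_iff'.1 hg {v | v k < 0} (isOpen_lt (continuous_apply k) continuous_const)
  choose V hVopen hV using hopen
  obtain ⟨δ, hδ, hball⟩ :=
    lebesgue_number_lemma_of_metric (isCompact_stdSimplex ℝ (Fin 3)) hVopen fun μ hμ => by
      obtain ⟨k, hk⟩ := hneg μ hμ
      exact Set.mem_iUnion.2 ⟨k, ((Set.ext_iff.1 (hV k) μ).1 ⟨hk, hμ⟩).1⟩
  obtain ⟨N, hN⟩ := exists_nat_gt (2 / δ)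
  have hN0 : 0 < N := by exact_mod_cast (div_pos two_pos hδ).trans hN
  obtain ⟨x, y, hxy, hcell⟩ := exists_gridCell_forall_pos hcover hface hN0
  obtain ⟨k, hk⟩ := hball _ (gridPoint_mem_stdSimplex hN0 hxy.le)
  obtain ⟨i, hi, j, hj, hmem, hpos⟩ := hcell k
  have hclose : gridPoint N (x + i) (y + j) ∈ V k := hk <| Metric.mem_ball.2 <|
    (dist_gridPoint_le hN0 x y hi hj).trans_lt <| by
      rwa [div_lt_comm₀ (by exact_mod_cast hN0) hδ]
  exact hpos.not_gt ((Set.ext_iff.1 (hV k) _).2 ⟨hclose, hmem⟩).1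

end KKM

lemma sum_smul_mem_convexHull_range {ι E : Type*} [Fintype ι] [AddCommGroup E] [Module ℝ E]
    {μ : ι → ℝ} (hμ : μ ∈ stdSimplex ℝ ι) (z : ι → E) :
    ∑ i, μ i • z i ∈ convexHull ℝ (Set.range z) :=
  (convex_convexHull ℝ _).sum_mem (fun i _ => hμ.1 i) hμ.2
    fun i _ => subset_convexHull ℝ _ (Set.mem_range_self i)

lemma AffineBasis.coord_succ_sum_smul_lineMap {k V : Type*} [Field k] [AddCommGroup V]
    [Module k V] {n : ℕ} (b : AffineBasis (Fin (n + 1)) k V) (t μ : Fin n → k)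
    (hμ : ∑ i, μ i = 1) (j : Fin n) :
    b.coord j.succ (∑ i, μ i • AffineMap.lineMap (b 0) (b i.succ) (t i)) = t j * μ j := by
  rw [← Finset.univ.affineCombination_eq_linear_combination _ _ hμ,
    Finset.univ.map_affineCombination _ _ hμ,
    Finset.univ.affineCombination_eq_linear_combination _ _ hμ, Finset.sum_eq_single j]
  · rw [Function.comp_apply, AffineMap.apply_lineMap]
    simp [b.coord_apply, AffineMap.lineMap_apply_ring, mul_comm]
  · intro i _ hij
    simp [AffineMap.apply_lineMap, b.coord_apply, hij.symm]
  · simp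

theorem exists_mem_convexHull_forall_nonneg_dotProduct {bb : AffineBasis (Fin 4) ℝ (Fin 3 → ℝ)}
    {o : Fin 4 → Fin 3 → ℝ} {t : Fin 4 → ℝ}
    (ho : ∀ i : Fin 4, i ≠ 0 → o i = AffineMap.lineMap (bb 0) (bb i) (t i))
    {h : Fin 4 → Fin 3 → ℝ} {f : (Fin 3 → ℝ) → Fin 3 → ℝ}
    (hfc : ContinuousOn f (convexHull ℝ {o 1, o 2, o 3}))
    (hf : ∀ x ∈ convexHull ℝ {o 1, o 2, o 3}, f x ∈ icone h (isupp bb x))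
    (hcover : ∀ x ∈ convexHull ℝ {o 1, o 2, o 3}, ∃ j : Fin 3, 0 < h j.succ ⬝ᵥ f x) :
    ∃ x ∈ convexHull ℝ {o 1, o 2, o 3}, ∀ j : Fin 3, 0 ≤ h j.succ ⬝ᵥ f x := by
  set φ : (Fin 3 → ℝ) → Fin 3 → ℝ := fun μ => ∑ i, μ i • o i.succ
  have hφ_mem : ∀ μ ∈ stdSimplex ℝ (Fin 3), φ μ ∈ convexHull ℝ {o 1, o 2, o 3} := by
    have hrange : Set.range (fun i : Fin 3 => o i.succ) = {o 1, o 2, o 3} := by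
      simp [Set.range, Fin.exists_fin_succ, Set.ext_iff, eq_comm]
    simpa [hrange] using fun μ hμ => sum_smul_mem_convexHull_range hμ fun i : Fin 3 => o i.succ
  have hφ_coord : ∀ μ ∈ stdSimplex ℝ (Fin 3), ∀ j, μ j = 0 → bb.coord j.succ (φ μ) = 0 := by
    intro μ hμ j hj
    have hφ_lineMap : φ μ = ∑ i, μ i • AffineMap.lineMap (bb 0) (bb i.succ) (t i.succ) :=
      Finset.sum_congr rfl fun i _ => by rw [ho i.succ (Fin.succ_ne_zero i)]
    rw [hφ_lineMap, bb.coord_succ_sum_smul_lineMap _ _ hμ.2, hj, mul_zero]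
  obtain ⟨μ, hμ, hnonneg⟩ := exists_mem_stdSimplex_forall_nonneg
    (g := fun μ j => h j.succ ⬝ᵥ f (φ μ))
    (continuousOn_pi.2 fun j => continuous_const.dotProduct continuous_id |>.comp_continuousOn <|
      hfc.comp (by fun_prop : Continuous φ).continuousOn hφ_mem)
    (fun μ hμ => hcover _ (hφ_mem μ hμ))
    fun μ hμ j hj => hf _ (hφ_mem μ hμ) j.succ (Fin.succ_ne_zero j) <| by
      simp [isupp, hφ_coord μ hμ j hj]
  exact ⟨φ μ, hφ_mem μ hμ, hnonneg⟩

theorem stmt12_general (bb : AffineBasis (Fin 4) ℝ (Fin 3 → ℝ))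
    (h : Fin 4 → Fin 3 → ℝ)
    (B : Submodule ℝ (Fin 3 → ℝ))
    (o : Fin 4 → Fin 3 → ℝ) (t : Fin 4 → ℝ)
    (ho : ∀ i : Fin 4, i ≠ 0 → o i = AffineMap.lineMap (bb 0) (bb i) (t i))
    (G : Set (Fin 3 → ℝ))
    (hG : G = convexHull ℝ ({o 1, o 2, o 3} : Set (Fin 3 → ℝ))) :
    (∃ f : (Fin 3 → ℝ) → (Fin 3 → ℝ), ContinuousOn f G ∧
        ∀ x ∈ G, f x ∈ B ∧ f x ≠ 0 ∧ f x ∈ icone h (isupp bb x)) ↔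
      (↑B ∩ {y : Fin 3 → ℝ | ∀ j : Fin 4, j ≠ 0 → h j ⬝ᵥ y ≤ 0} :
        Set (Fin 3 → ℝ)) ≠ {0} := by
  subst hG
  constructor
  · rintro ⟨f, hfc, hf⟩ hcone
    have hzero : ∀ y ∈ B, (∀ j : Fin 3, h j.succ ⬝ᵥ y ≤ 0) → y = 0 := fun y hyB hy => by
      have hmem : y ∈ (↑B ∩ {y : Fin 3 → ℝ | ∀ j : Fin 4, j ≠ 0 → h j ⬝ᵥ y ≤ 0} :
          Set (Fin 3 → ℝ)) :=
        ⟨hyB, fun j hj => by obtain ⟨j, rfl⟩ := Fin.exists_succ_eq.2 hj; exact hy j⟩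
      rwa [hcone] at hmem
    by_cases hcover : ∀ x ∈ convexHull ℝ {o 1, o 2, o 3}, ∃ j : Fin 3, 0 < h j.succ ⬝ᵥ f x
    · obtain ⟨x, hx, hnonneg⟩ := exists_mem_convexHull_forall_nonneg_dotProduct ho hfc
        (fun x hx => (hf x hx).2.2) hcover
      exact (hf x hx).2.1 <| neg_eq_zero.1 <| hzero _ (B.neg_mem (hf x hx).1)
        fun j => by simpa [dotProduct_neg] using hnonneg j
    · push Not at hcover
      obtain ⟨x, hx, hle⟩ := hcover
      exact (hf x hx).2.1 (hzero _ (hf x hx).1 hle)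
  · intro hne
    obtain ⟨y, ⟨hyB, hy⟩, hy0⟩ : ∃ y ∈ (↑B ∩ {y : Fin 3 → ℝ | ∀ j : Fin 4, j ≠ 0 → h j ⬝ᵥ y ≤ 0} :
        Set (Fin 3 → ℝ)), y ≠ 0 := by
      by_contra! hsub
      exact hne (Set.eq_singleton_iff_unique_mem.2 ⟨⟨B.zero_mem, by simp⟩, hsub⟩)
    exact ⟨fun _ => y, continuousOn_const, fun x _ => ⟨hyB, hy0, fun j hj _ => hy j hj⟩⟩

/-- For `n = 3`, `G = conv{o₁,o₂,o₃} ⊆ S` with `v₀ ∉ G` and `oᵢ ∈ (v₀, vᵢ]`: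
a continuous nowhere-vanishing selection `f : G → B` with `f(x) ∈ C(x)` exists
iff `B ∩ cone(G) ≠ {0}`, where `cone(G) = {y : h_j ⬝ᵥ y ≤ 0, j = 1,2,3}`. -/
theorem stmt12 (bb : AffineBasis (Fin 4) ℝ (Fin 3 → ℝ))
    (h : Fin 4 → Fin 3 → ℝ) (hout : IsOutwardNormals (⇑bb) h)
    (B : Submodule ℝ (Fin 3 → ℝ))
    (o : Fin 4 → Fin 3 → ℝ) (t : Fin 4 → ℝ)
    (ht : ∀ i : Fin 4, i ≠ 0 → t i ∈ Set.Ioc (0 : ℝ) 1)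
    (ho : ∀ i : Fin 4, i ≠ 0 → o i = AffineMap.lineMap (bb 0) (bb i) (t i))
    (G : Set (Fin 3 → ℝ))
    (hG : G = convexHull ℝ ({o 1, o 2, o 3} : Set (Fin 3 → ℝ)))
    (hv0 : bb 0 ∉ G) :
    (∃ f : (Fin 3 → ℝ) → (Fin 3 → ℝ), ContinuousOn f G ∧
        ∀ x ∈ G, f x ∈ B ∧ f x ≠ 0 ∧ f x ∈ icone h (isupp bb x)) ↔
      (↑B ∩ {y : Fin 3 → ℝ | ∀ j : Fin 4, j ≠ 0 → h j ⬝ᵥ y ≤ 0} :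
        Set (Fin 3 → ℝ)) ≠ {0} :=
  stmt12_general bb h B o t ho G hG
end

section
/- Let G = conv{o_1, o_2, o_3, o_4} ⊆ S ⊆ R^3 be a quadrilateral with o_1 ∈ (v_0, v_2), o_2 ∈ (v_0, v_3), o_3 ∈ (v_1, v_2), o_4 ∈ (v_1, v_3) (open segments, none of the o_i a vertex of S), and suppose there exist linearly independent b_1 ∈ B ∩ C(o_1), b_2 ∈ B ∩ C(o_2) with b_2 · h_2 < 0. Write o_4 = α_1 o_1 + α_2 o_2 + α_3 o_3 (the o_1, o_2, o_3 are linearly independent), where α_2 > 0. Choose ε = -α_2 (b_2 · h_2) / |2(α_1 + α_3)(b_1 · h_2)| if (α_1+α_3)(b_1 · h_2) ≠ 0, else ε = 1, and let A be the linear map with A o_1 = ε b_1, A o_2 = b_2, A o_3 = ε b_1. Then f(x) = Ax defines an affine map f : G → B with f(x) ∈ C(x) and f(x) ≠ 0 for all x ∈ G. -/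
open Matrix

/-- Decomposition of a point of the convex hull of four points as an explicit
convex combination. -/
theorem hull4 {o₁ o₂ o₃ o₄ x : Fin 3 → ℝ}
    (hx : x ∈ convexHull ℝ ({o₁, o₂, o₃, o₄} : Set (Fin 3 → ℝ))) :
    ∃ c : Fin 4 → ℝ, (∀ i, 0 ≤ c i) ∧ (c 0 + c 1 + c 2 + c 3 = 1) ∧
      c 0 • o₁ + c 1 • o₂ + c 2 • o₃ + c 3 • o₄ = x := by
  have hr : ({o₁,o₂,o₃,o₄} : Set (Fin 3 → ℝ)) = Set.range ![o₁,o₂,o₃,o₄] := by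
    ext y; simp [Matrix.range_cons, Matrix.range_empty]; tauto
  rw [hr, convexHull_range_eq_exists_affineCombination] at hx
  obtain ⟨s, w, hw0, hw1, hx⟩ := hx
  refine ⟨fun i => if i ∈ s then w i else 0,
    fun i => by dsimp; split_ifs with hi; exacts [hw0 i hi, le_rfl], ?_, ?_⟩
  · have h2 := Finset.sum_ite_mem Finset.univ s w
    simp only [Finset.univ_inter] at h2
    rw [← hw1, ← h2, Fin.sum_univ_four]
  · rw [← hx, Finset.affineCombination_eq_linear_combination s _ w hw1]
    have h2 : ∑ i : Fin 4, (if i ∈ s then w i else 0) • (![o₁,o₂,o₃,o₄] i)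
        = ∑ i ∈ s, w i • ![o₁,o₂,o₃,o₄] i := by
      simp only [ite_smul, zero_smul]
      rw [Finset.sum_ite_mem, Finset.univ_inter]
    rw [← h2, Fin.sum_univ_four]
    simp

/-- A barycentric coordinate evaluated on an affine (convex) combination of four
points is the corresponding combination of the coordinates. -/
theorem coord_comb4 (bb : AffineBasis (Fin 4) ℝ (Fin 3 → ℝ)) (c : Fin 4 → ℝ)
    (o₁ o₂ o₃ o₄ x : Fin 3 → ℝ) (hc1 : c 0 + c 1 + c 2 + c 3 = 1)
    (hcx : c 0 • o₁ + c 1 • o₂ + c 2 • o₃ + c 3 • o₄ = x) (j : Fin 4) :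
    bb.coord j x = c 0 * bb.coord j o₁ + c 1 * bb.coord j o₂
      + c 2 * bb.coord j o₃ + c 3 * bb.coord j o₄ := by
  have hpt : ∀ y, bb.coord j y = (bb.coord j).linear y + bb.coord j 0 := fun y => by
    conv_lhs => rw [AffineMap.decomp (bb.coord j)]
    simp
  rw [← hcx, hpt (c 0 • o₁ + c 1 • o₂ + c 2 • o₃ + c 3 • o₄), hpt o₁, hpt o₂, hpt o₃, hpt o₄]
  simp only [map_add, LinearMap.map_smul, smul_eq_mul]
  linear_combination (-(bb.coord j 0)) * hc1

lemma two_nonneg_zero {a b p q : ℝ} (ha : 0 ≤ a) (hb : 0 ≤ b) (hp : 0 < p)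
    (hq : 0 < q) (hs : a * p + b * q ≤ 0) : a = 0 ∧ b = 0 := by
  constructor <;> nlinarith [mul_nonneg ha hp.le, mul_nonneg hb hq.le]

set_option maxHeartbeats 1000000 in
/-- Quadrilateral case: with `o₁ ∈ (v₀,v₂)`, `o₂ ∈ (v₀,v₃)`, `o₃ ∈ (v₁,v₂)`,
`o₄ ∈ (v₁,v₃)`, linearly independent `b₁ ∈ B ∩ C(o₁)`, `b₂ ∈ B ∩ C(o₂)` with
`b₂ ⬝ᵥ h₂ < 0`, and `A` the linear map with `A o₁ = ε b₁`, `A o₂ = b₂`,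
`A o₃ = ε b₁` for the specified `ε`, the map `x ↦ A x` is a nowhere-vanishing
selection into `B` satisfying the cone condition on `conv{o₁,o₂,o₃,o₄}`. -/
theorem stmt17 (bb : AffineBasis (Fin 4) ℝ (Fin 3 → ℝ))
    (h : Fin 4 → Fin 3 → ℝ) (hout : IsOutwardNormals (⇑bb) h)
    (B : Submodule ℝ (Fin 3 → ℝ)) (hB : Module.finrank ℝ B = 2)
    (o₁ o₂ o₃ o₄ : Fin 3 → ℝ)
    (hseg₁ : o₁ ∈ openSegment ℝ (bb 0) (bb 2))
    (hseg₂ : o₂ ∈ openSegment ℝ (bb 0) (bb 3))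
    (hseg₃ : o₃ ∈ openSegment ℝ (bb 1) (bb 2))
    (hseg₄ : o₄ ∈ openSegment ℝ (bb 1) (bb 3))
    (b₁ b₂ : Fin 3 → ℝ) (hb : LinearIndependent ℝ ![b₁, b₂])
    (hb₁B : b₁ ∈ B) (hb₁C : b₁ ∈ icone h (isupp bb o₁))
    (hb₂B : b₂ ∈ B) (hb₂C : b₂ ∈ icone h (isupp bb o₂))
    (hb₂h₂ : b₂ ⬝ᵥ h 2 < 0)
    (ho : LinearIndependent ℝ ![o₁, o₂, o₃])
    (α₁ α₂ α₃ : ℝ) (ho₄ : o₄ = α₁ • o₁ + α₂ • o₂ + α₃ • o₃) (hα₂ : 0 < α₂)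
    (ε : ℝ)
    (hε : ε = if (α₁ + α₃) * (b₁ ⬝ᵥ h 2) = 0 then 1
      else -(α₂ * (b₂ ⬝ᵥ h 2)) / |2 * (α₁ + α₃) * (b₁ ⬝ᵥ h 2)|)
    (A : (Fin 3 → ℝ) →ₗ[ℝ] (Fin 3 → ℝ))
    (hA1 : A o₁ = ε • b₁) (hA2 : A o₂ = b₂) (hA3 : A o₃ = ε • b₁) :
    ∀ x ∈ convexHull ℝ ({o₁, o₂, o₃, o₄} : Set (Fin 3 → ℝ)),
      A x ∈ B ∧ A x ∈ icone h (isupp bb x) ∧ A x ≠ 0 := by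
  obtain ⟨a₁, a₂, ha₁, ha₂, haa, hoe₁⟩ := hseg₁
  obtain ⟨d₁, d₂, hd₁, hd₂, hdd, hoe₂⟩ := hseg₂
  obtain ⟨e₁, e₂, he₁, he₂, hee, hoe₃⟩ := hseg₃
  obtain ⟨f₁, f₂, hf₁, hf₂, hff, hoe₄⟩ := hseg₄
  have k11 : bb.coord 1 o₁ = 0 := by
    rw [← hoe₁, Convex.combo_affine_apply haa]; simp [AffineBasis.coord_apply]
  have k12 : bb.coord 2 o₁ = a₂ := by
    rw [← hoe₁, Convex.combo_affine_apply haa]; simp [AffineBasis.coord_apply]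
  have k13 : bb.coord 3 o₁ = 0 := by
    rw [← hoe₁, Convex.combo_affine_apply haa]; simp [AffineBasis.coord_apply]
  have k21 : bb.coord 1 o₂ = 0 := by
    rw [← hoe₂, Convex.combo_affine_apply hdd]; simp [AffineBasis.coord_apply]
  have k22 : bb.coord 2 o₂ = 0 := by
    rw [← hoe₂, Convex.combo_affine_apply hdd]; simp [AffineBasis.coord_apply]
  have k23 : bb.coord 3 o₂ = d₂ := by
    rw [← hoe₂, Convex.combo_affine_apply hdd]; simp [AffineBasis.coord_apply]
  have k31 : bb.coord 1 o₃ = e₁ := by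
    rw [← hoe₃, Convex.combo_affine_apply hee]; simp [AffineBasis.coord_apply]
  have k32 : bb.coord 2 o₃ = e₂ := by
    rw [← hoe₃, Convex.combo_affine_apply hee]; simp [AffineBasis.coord_apply]
  have k33 : bb.coord 3 o₃ = 0 := by
    rw [← hoe₃, Convex.combo_affine_apply hee]; simp [AffineBasis.coord_apply]
  have k41 : bb.coord 1 o₄ = f₁ := by
    rw [← hoe₄, Convex.combo_affine_apply hff]; simp [AffineBasis.coord_apply]
  have k42 : bb.coord 2 o₄ = 0 := by
    rw [← hoe₄, Convex.combo_affine_apply hff]; simp [AffineBasis.coord_apply]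
  have k43 : bb.coord 3 o₄ = f₂ := by
    rw [← hoe₄, Convex.combo_affine_apply hff]; simp [AffineBasis.coord_apply]
  have h1b₁ : h 1 ⬝ᵥ b₁ ≤ 0 := hb₁C 1 (by decide) (by simp [isupp, k11])
  have h3b₁ : h 3 ⬝ᵥ b₁ ≤ 0 := hb₁C 3 (by decide) (by simp [isupp, k13])
  have h1b₂ : h 1 ⬝ᵥ b₂ ≤ 0 := hb₂C 1 (by decide) (by simp [isupp, k21])
  have h2b₂ : h 2 ⬝ᵥ b₂ < 0 := by rwa [dotProduct_comm]
  have h2b₁ : h 2 ⬝ᵥ b₁ = b₁ ⬝ᵥ h 2 := dotProduct_comm _ _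
  have hW : 0 < -(α₂ * (b₂ ⬝ᵥ h 2)) := by
    rw [← mul_neg]; exact mul_pos hα₂ (neg_pos.mpr hb₂h₂)
  have hεpos : 0 < ε := by
    rw [hε]; split_ifs with ht
    · exact one_pos
    · exact div_pos hW (abs_pos.mpr (by intro hz; apply ht; linarith))
  have εkey : ε * ((α₁ + α₃) * (b₁ ⬝ᵥ h 2)) ≤ -(α₂ * (b₂ ⬝ᵥ h 2)) / 2 := by
    set t := (α₁ + α₃) * (b₁ ⬝ᵥ h 2) with hts
    rw [hε]; split_ifs with ht
    · rw [ht, mul_zero]; positivity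
    · have h2t : 2 * (α₁ + α₃) * (b₁ ⬝ᵥ h 2) = 2 * t := by rw [hts]; ring
      have habs : |2 * (α₁ + α₃) * (b₁ ⬝ᵥ h 2)| = 2 * |t| := by
        rw [h2t, abs_mul, abs_two]
      have htpos : 0 < |t| := abs_pos.mpr ht
      rw [habs, div_mul_eq_mul_div, div_le_div_iff₀ (by positivity) two_pos]
      nlinarith [mul_nonneg hW.le (sub_nonneg.mpr (le_abs_self t))]
  intro x hx
  obtain ⟨c, hc0, hc1, hcx⟩ := hull4 hx
  have hAo₄ : A o₄ = (ε * (α₁ + α₃)) • b₁ + α₂ • b₂ := by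
    rw [ho₄]; simp only [map_add, LinearMap.map_smul, hA1, hA2, hA3]; module
  have hAx : A x = (ε * (c 0) + ε * (c 2) + c 3 * (ε * (α₁ + α₃))) • b₁
      + (c 1 + c 3 * α₂) • b₂ := by
    rw [← hcx]
    simp only [map_add, LinearMap.map_smul, hA1, hA2, hA3, hAo₄]
    module
  have hcoord := coord_comb4 bb c o₁ o₂ o₃ o₄ x hc1 hcx
  refine ⟨?_, ?_, ?_⟩
  · rw [hAx]
    exact Submodule.add_mem _ (Submodule.smul_mem _ _ hb₁B) (Submodule.smul_mem _ _ hb₂B)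
  · intro j hj0 hjmem
    have h4 : j = 1 ∨ j = 2 ∨ j = 3 := by
      fin_cases j
      exacts [absurd rfl hj0, Or.inl rfl, Or.inr (Or.inl rfl), Or.inr (Or.inr rfl)]
    simp only [isupp, Set.mem_setOf_eq, not_lt] at hjmem
    rw [hAx]
    simp only [dotProduct_add, dotProduct_smul, smul_eq_mul]
    rcases h4 with rfl | rfl | rfl
    · -- facet 1 : c 2 = c 3 = 0
      have hco := hcoord 1
      rw [k11, k21, k31, k41] at hco
      obtain ⟨hc2, hc3⟩ := two_nonneg_zero (hc0 2) (hc0 3) he₁ hf₁ (by linarith)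
      rw [hc2, hc3]
      linarith [mul_nonneg (mul_nonneg hεpos.le (hc0 0)) (neg_nonneg.mpr h1b₁),
        mul_nonneg (hc0 1) (neg_nonneg.mpr h1b₂)]
    · -- facet 2 : c 0 = c 2 = 0
      have hco := hcoord 2
      rw [k12, k22, k32, k42] at hco
      obtain ⟨hc2, hc3⟩ := two_nonneg_zero (hc0 0) (hc0 2) ha₂ he₂ (by linarith)
      rw [hc2, hc3, h2b₁]
      have key2 : c 3 * (ε * ((α₁ + α₃) * (b₁ ⬝ᵥ h 2)))
          ≤ c 3 * (-(α₂ * (b₂ ⬝ᵥ h 2)) / 2) :=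
        mul_le_mul_of_nonneg_left εkey (hc0 3)
      have hw : b₂ ⬝ᵥ h 2 = h 2 ⬝ᵥ b₂ := dotProduct_comm _ _
      rw [hw] at key2
      linarith [key2, mul_nonneg (hc0 1) (neg_nonneg.mpr h2b₂.le),
        mul_nonneg (mul_nonneg (hc0 3) hα₂.le) (neg_nonneg.mpr h2b₂.le)]
    · -- facet 3 : c 1 = c 3 = 0
      have hco := hcoord 3
      rw [k13, k23, k33, k43] at hco
      obtain ⟨hc2, hc3⟩ := two_nonneg_zero (hc0 1) (hc0 3) hd₂ hf₂ (by linarith)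
      rw [hc2, hc3]
      linarith [mul_nonneg (mul_nonneg hεpos.le (hc0 0)) (neg_nonneg.mpr h3b₁),
        mul_nonneg (mul_nonneg hεpos.le (hc0 2)) (neg_nonneg.mpr h3b₁)]
  · rw [hAx]
    intro h0
    obtain ⟨hP, hQ⟩ := (LinearIndependent.pair_iff.mp hb) _ _ h0
    obtain ⟨hc1', hc3'⟩ := two_nonneg_zero (hc0 1) (hc0 3) one_pos hα₂ (by linarith)
    rw [hc3'] at hP
    rw [hc1', hc3'] at hc1
    have hsum : c 0 + c 2 = 1 := by linarith
    have hε0 : ε * (c 0 + c 2) = 0 := by linear_combination hP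
    rw [hsum, mul_one] at hε0
    exact absurd hε0 (ne_of_gt hεpos)
end
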